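/- Let φ : A(Γ₀) → A(Γ₁) be the group homomorphism determined by sending the generator q to the product ef and sending each of the generators a, b, c, d, g, h to the generator of the same name. Then φ is well-defined and injective; in particular A(Γ₀) embeds into A(Γ₁). -/

import Mathlib

open scoped commutatorElement

/-- The defining relators of the right-angled Artin group on a simple graph `G`:
the commutators of the generators corresponding to adjacent vertices. -/
def raagRels {V : Type*} (G : SimpleGraph V) : Set (FreeGroup V) :=
  {r | ∃ u v : V, G.Adj u v ∧ r = ⁅FreeGroup.of u, FreeGroup.of v⁆}

/-- The right-angled Artin group on a simple graph `G`. -/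
abbrev RAAG {V : Type*} (G : SimpleGraph V) : Type _ := PresentedGroup (raagRels G)

/-- The generator of the right-angled Artin group corresponding to a vertex. -/
def gen {V : Type*} (G : SimpleGraph V) (v : V) : RAAG G := PresentedGroup.of v

/-- Vertices of the graph Γ₀. -/
inductive V0 : Type | a | b | c | d | q | g | h
deriving DecidableEq

/-- The graph Γ₀ with edges ab, bc, cd, da, qa, qb, qc, qd, ga, gb, gc, ha, hb, hd. -/
def G0 : SimpleGraph V0 := SimpleGraph.fromRel (fun u v => (u, v) ∈
  ([(.a,.b),(.b,.c),(.c,.d),(.d,.a),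
    (.q,.a),(.q,.b),(.q,.c),(.q,.d),
    (.g,.a),(.g,.b),(.g,.c),
    (.h,.a),(.h,.b),(.h,.d)] : List (V0 × V0)))

/-- Vertices of the graph Γ₁. -/
inductive V1 : Type | a | b | c | d | e | f | g | h
deriving DecidableEq

/-- The graph Γ₁ with edges ab, bc, cd, da, ea, eb, ec, ed, fa, fb, fc, fd, ef,
ga, gb, gc, ge, ha, hb, hd, hf. -/
def G1 : SimpleGraph V1 := SimpleGraph.fromRel (fun u v => (u, v) ∈
  ([(.a,.b),(.b,.c),(.c,.d),(.d,.a),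
    (.e,.a),(.e,.b),(.e,.c),(.e,.d),
    (.f,.a),(.f,.b),(.f,.c),(.f,.d),(.e,.f),
    (.g,.a),(.g,.b),(.g,.c),(.g,.e),
    (.h,.a),(.h,.b),(.h,.d),(.h,.f)] : List (V1 × V1)))

/-!
Let `α` be the automorphism of `A(Γ₀)` conjugating `h` by `q` and fixing the other generators;
it is well defined because every neighbour of `h` lies in the star of `q`. In
`K = A(Γ₀) ⋊_α ℤ` with stable letter `t`, sending `e ↦ t`, `f ↦ q t⁻¹` and every other generator
of `A(Γ₁)` to its namesake respects the relations of `A(Γ₁)`; the only delicate one, `[h, f] = 1`,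
holds because `t⁻¹ h t = q⁻¹ h q`. Since `t q t⁻¹ = α q = q`, the composite `A(Γ₀) → A(Γ₁) → K`
is the inclusion of `A(Γ₀)`, so `φ` is injective.
-/

theorem commute_of_adj_fromRel_mem {V M : Type*} [Mul M] {f : V → M} {L : List (V × V)}
    (hL : ∀ p ∈ L, Commute (f p.1) (f p.2)) (u v : V)
    (huv : (SimpleGraph.fromRel fun u v => (u, v) ∈ L).Adj u v) : Commute (f u) (f v) := by
  obtain ⟨-, huv | hvu⟩ := SimpleGraph.fromRel_adj _ u v |>.mp huv
  exacts [hL _ huv, (hL _ hvu).symm]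

namespace RAAG

variable {V H : Type*} [Group H] {Γ : SimpleGraph V}

theorem gen_commute {u v : V} (huv : Γ.Adj u v) : Commute (gen Γ u) (gen Γ v) := by
  have hrel : PresentedGroup.mk (raagRels Γ) ⁅FreeGroup.of u, FreeGroup.of v⁆ = 1 :=
    (QuotientGroup.eq_one_iff _).2 (Subgroup.subset_normalClosure ⟨u, v, huv, rfl⟩)
  rw [map_commutatorElement] at hrel
  exact commutatorElement_eq_one_iff_commute.mp hrel

def lift (f : V → H) (hf : ∀ u v, Γ.Adj u v → Commute (f u) (f v)) : RAAG Γ →* H :=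
  PresentedGroup.toGroup <| by
    rintro r ⟨u, v, huv, rfl⟩
    rw [map_commutatorElement, FreeGroup.lift_apply_of, FreeGroup.lift_apply_of]
    exact commutatorElement_eq_one_iff_commute.mpr (hf u v huv)

@[simp]
theorem lift_gen (f : V → H) (hf : ∀ u v, Γ.Adj u v → Commute (f u) (f v)) (v : V) :
    lift f hf (gen Γ v) = f v :=
  PresentedGroup.toGroup.of _

theorem hom_ext {φ ψ : RAAG Γ →* H} (h : ∀ v, φ (gen Γ v) = ψ (gen Γ v)) : φ = ψ :=
  PresentedGroup.ext h

section PartialConj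

variable (S : Set V) [DecidablePred (· ∈ S)]

def partialConj (x : RAAG Γ) (hx : ∀ u v, Γ.Adj u v → u ∈ S → v ∉ S → Commute x (gen Γ v)) :
    RAAG Γ →* RAAG Γ :=
  lift (fun v => if v ∈ S then x * gen Γ v * x⁻¹ else gen Γ v) <| by
    have conj_commute {u v} (huv : Γ.Adj u v) (hu : u ∈ S) (hv : v ∉ S) :
        Commute (x * gen Γ u * x⁻¹) (gen Γ v) :=
      ((hx u v huv hu hv).mul_left (gen_commute huv)).mul_left (hx u v huv hu hv).inv_left
    intro u v huv
    by_cases hu : u ∈ S <;> by_cases hv : v ∈ S <;> simp only [hu, hv, if_true, if_false]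
    · exact (gen_commute huv).conj x
    · exact conj_commute huv hu hv
    · exact (conj_commute huv.symm hv hu).symm
    · exact gen_commute huv

theorem partialConj_gen_of_mem {x : RAAG Γ} (hx) {v : V} (hv : v ∈ S) :
    partialConj S x hx (gen Γ v) = x * gen Γ v * x⁻¹ := by
  simp [partialConj, hv]

theorem partialConj_gen_of_notMem {x : RAAG Γ} (hx) {v : V} (hv : v ∉ S) :
    partialConj S x hx (gen Γ v) = gen Γ v := by
  simp [partialConj, hv]

theorem partialConj_comp_partialConj {x y : RAAG Γ} (hx hy) (hyx : y = x⁻¹)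
    (hfix : partialConj S x hx y = y) :
    (partialConj S x hx).comp (partialConj S y hy) = MonoidHom.id _ := by
  refine hom_ext fun v => ?_
  by_cases hv : v ∈ S
  · rw [MonoidHom.comp_apply, partialConj_gen_of_mem S hy hv, map_mul, map_mul, map_inv, hfix,
      partialConj_gen_of_mem S hx hv, hyx, MonoidHom.id_apply]
    group
  · simp [partialConj_gen_of_notMem, hv]

def partialConjEquiv (q : V) (hq : q ∉ S)
    (hS : ∀ u v, Γ.Adj u v → u ∈ S → v ∉ S → v = q ∨ Γ.Adj q v) : RAAG Γ ≃* RAAG Γ :=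
  have hx : ∀ u v, Γ.Adj u v → u ∈ S → v ∉ S → Commute (gen Γ q) (gen Γ v) := by
    intro u v huv hu hv
    rcases hS u v huv hu hv with rfl | hqv
    exacts [Commute.refl _, gen_commute hqv]
  have hx' : ∀ u v, Γ.Adj u v → u ∈ S → v ∉ S → Commute (gen Γ q)⁻¹ (gen Γ v) :=
    fun u v huv hu hv => (hx u v huv hu hv).inv_left
  MonoidHom.toMulEquiv (partialConj S (gen Γ q) hx) (partialConj S (gen Γ q)⁻¹ hx')
    (partialConj_comp_partialConj S hx' hx rfl (partialConj_gen_of_notMem S hx' hq))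
    (partialConj_comp_partialConj S hx hx' (inv_inv _).symm
      (by rw [map_inv, partialConj_gen_of_notMem S hx hq]))

theorem partialConjEquiv_gen_of_notMem {q : V} (hq hS) {v : V} (hv : v ∉ S) :
    partialConjEquiv (Γ := Γ) S q hq hS (gen Γ v) = gen Γ v := by
  simp [partialConjEquiv, partialConj_gen_of_notMem, hv]

theorem partialConjEquiv_symm_gen_of_mem {q : V} (hq hS) {v : V} (hv : v ∈ S) :
    (partialConjEquiv (Γ := Γ) S q hq hS).symm (gen Γ v) = (gen Γ q)⁻¹ * gen Γ v * gen Γ q := by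
  simp [partialConjEquiv, partialConj_gen_of_mem, hv]

end PartialConj

end RAAG

instance : DecidableRel G0.Adj := fun u v => decidable_of_iff' _ (SimpleGraph.fromRel_adj _ u v)

instance : DecidableRel G1.Adj := fun u v => decidable_of_iff' _ (SimpleGraph.fromRel_adj _ u v)

open SemidirectProduct RAAG

def raagG0ToG1Gen : V0 → RAAG G1
  | .a => gen G1 .a
  | .b => gen G1 .b
  | .c => gen G1 .c
  | .d => gen G1 .d
  | .q => gen G1 .e * gen G1 .f
  | .g => gen G1 .g
  | .h => gen G1 .h

theorem raagG0ToG1Gen_commute : ∀ u v, G0.Adj u v →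
    Commute (raagG0ToG1Gen u) (raagG0ToG1Gen v) := by
  refine commute_of_adj_fromRel_mem ?_
  simp only [List.forall_mem_cons, List.not_mem_nil, IsEmpty.forall_iff, implies_true, and_true]
  -- the goals follow the edge list of `G0`: ab bc cd da, qa qb qc qd, ga gb gc ha hb hd
  and_intros
  iterate 4 exact gen_commute (by decide)
  iterate 4 exact (gen_commute (by decide)).mul_left (gen_commute (by decide))
  iterate 6 exact gen_commute (by decide)

def raagG0ToG1 : RAAG G0 →* RAAG G1 := RAAG.lift raagG0ToG1Gen raagG0ToG1Gen_commute

def conjHByQ : RAAG G0 ≃* RAAG G0 :=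
  partialConjEquiv {V0.h} V0.q (by decide) <| by
    rintro _ v huv rfl hv
    revert huv hv
    cases v <;> decide

theorem conjHByQ_symm_gen_h :
    conjHByQ.symm (gen G0 .h) = (gen G0 .q)⁻¹ * gen G0 .h * gen G0 .q :=
  partialConjEquiv_symm_gen_of_mem _ _ _ rfl

theorem conjHByQ_gen_of_ne {v : V0} (hv : v ≠ .h) : conjHByQ (gen G0 v) = gen G0 v :=
  partialConjEquiv_gen_of_notMem _ _ _ hv

abbrev SemidirectG0 : Type := RAAG G0 ⋊[zpowersHom _ conjHByQ] Multiplicative ℤ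

def stableLetter : SemidirectG0 := inr (.ofAdd 1)

theorem stableLetter_conj_inl (x : RAAG G0) :
    stableLetter * inl x * stableLetter⁻¹ = inl (conjHByQ x) := by
  rw [stableLetter, ← map_inv, ← inl_aut]
  simp

theorem stableLetter_inv_conj_inl (x : RAAG G0) :
    stableLetter⁻¹ * inl x * stableLetter = inl (conjHByQ.symm x) := by
  rw [stableLetter, ← map_inv, ← inl_aut_inv]
  simp

theorem commute_stableLetter_inl_gen {v : V0} (hv : v ≠ .h) :
    Commute stableLetter (inl (gen G0 v)) :=
  mul_inv_eq_iff_eq_mul.mp <| by rw [stableLetter_conj_inl, conjHByQ_gen_of_ne hv]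

def toSemidirectGen : V1 → SemidirectG0
  | .a => inl (gen G0 .a)
  | .b => inl (gen G0 .b)
  | .c => inl (gen G0 .c)
  | .d => inl (gen G0 .d)
  | .e => stableLetter
  | .f => inl (gen G0 .q) * stableLetter⁻¹
  | .g => inl (gen G0 .g)
  | .h => inl (gen G0 .h)

theorem commute_toSemidirectGen_e_f : Commute (toSemidirectGen .e) (toSemidirectGen .f) :=
  (commute_stableLetter_inl_gen (by decide)).mul_right (Commute.refl _).inv_right

theorem commute_toSemidirectGen_f_inl_gen {v : V0} (hv : G0.Adj .q v) :
    Commute (toSemidirectGen .f) (inl (gen G0 v)) := by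
  have hvh : v ≠ .h := by rintro rfl; exact absurd hv (by decide)
  exact ((gen_commute hv).map inl).mul_left (commute_stableLetter_inl_gen hvh).inv_left

theorem commute_inl_gen_h_toSemidirectGen_f : Commute (inl (gen G0 .h)) (toSemidirectGen .f) := by
  set t := stableLetter
  set h : SemidirectG0 := inl (gen G0 .h)
  set q : SemidirectG0 := inl (gen G0 .q)
  have hconj : t⁻¹ * h = q⁻¹ * h * q * t⁻¹ := by
    rw [eq_mul_inv_iff_mul_eq, stableLetter_inv_conj_inl, conjHByQ_symm_gen_h, map_mul, map_mul,
      map_inv]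
  calc h * (q * t⁻¹) = q * (q⁻¹ * h * q * t⁻¹) := by group
    _ = q * t⁻¹ * h := by rw [← hconj, mul_assoc]

theorem toSemidirectGen_commute : ∀ u v, G1.Adj u v →
    Commute (toSemidirectGen u) (toSemidirectGen v) := by
  refine commute_of_adj_fromRel_mem ?_
  simp only [List.forall_mem_cons, List.not_mem_nil, IsEmpty.forall_iff, implies_true, and_true]
  -- the goals follow the edge list of `G1`: ab bc cd da, ea eb ec ed, fa fb fc fd, ef,
  -- ga gb gc, ge, ha hb hd, hf
  and_intros
  iterate 4 exact (gen_commute (by decide)).map inl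
  iterate 4 exact commute_stableLetter_inl_gen (by decide)
  iterate 4 exact commute_toSemidirectGen_f_inl_gen (by decide)
  · exact commute_toSemidirectGen_e_f
  iterate 3 exact (gen_commute (by decide)).map inl
  · exact (commute_stableLetter_inl_gen (by decide)).symm
  iterate 3 exact (gen_commute (by decide)).map inl
  · exact commute_inl_gen_h_toSemidirectGen_f

def toSemidirect : RAAG G1 →* SemidirectG0 := RAAG.lift toSemidirectGen toSemidirectGen_commute

theorem toSemidirect_comp_raagG0ToG1 : toSemidirect.comp raagG0ToG1 = inl := by
  refine RAAG.hom_ext fun v => ?_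
  cases v
  case q =>
    simp only [MonoidHom.comp_apply, raagG0ToG1, toSemidirect, RAAG.lift_gen, raagG0ToG1Gen,
      map_mul, toSemidirectGen]
    rw [← mul_assoc, stableLetter_conj_inl, conjHByQ_gen_of_ne (by decide)]
  all_goals rfl

/-- There is a (well-defined) group homomorphism `φ : A(Γ₀) → A(Γ₁)` sending the
generator `q` to the product `ef` and every other generator to the generator of the
same name, and `φ` is injective. -/
theorem raag_G0_embeds_in_raag_G1 :
    ∃ φ : RAAG G0 →* RAAG G1,
      φ (gen G0 V0.q) = gen G1 V1.e * gen G1 V1.f ∧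
      φ (gen G0 V0.a) = gen G1 V1.a ∧
      φ (gen G0 V0.b) = gen G1 V1.b ∧
      φ (gen G0 V0.c) = gen G1 V1.c ∧
      φ (gen G0 V0.d) = gen G1 V1.d ∧
      φ (gen G0 V0.g) = gen G1 V1.g ∧
      φ (gen G0 V0.h) = gen G1 V1.h ∧
      Function.Injective φ := by
  refine ⟨raagG0ToG1, RAAG.lift_gen _ _ _, RAAG.lift_gen _ _ _, RAAG.lift_gen _ _ _,
    RAAG.lift_gen _ _ _, RAAG.lift_gen _ _ _, RAAG.lift_gen _ _ _, RAAG.lift_gen _ _ _, ?_⟩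
  refine Function.Injective.of_comp (f := toSemidirect) ?_
  rw [← MonoidHom.coe_comp, toSemidirect_comp_raagG0ToG1]
  exact inl_injective
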